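/- arXiv:0805.0311 — 3 statements merged into one kernel-verified Lean document; each statement's English description precedes it below -/
import Mathlib

section
/- For a finite-dimensional real vector space V of dimension n with quadratic form Φ, the canonical map i : V → Cl(Φ) is injective and Cl(Φ) has dimension 2ⁿ as a real vector space; moreover, given a basis (e₁,…,eₙ) of V, the products i(e_{i₁})⋯i(e_{i_k}) for 1 ≤ i₁ < ⋯ < i_k ≤ n together with 1 form a basis of Cl(Φ). -/
/-!
The products `ι(v i₁) ⋯ ι(v iₖ)` along sorted index sets span `Cl(Q)` whenever the `v i` span
the module: left multiplication by a generator `ι(v i)` keeps their span, since `ι(v i)` can be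
moved into sorted position using `ι(v i) ι(v a) = polar Q (v i) (v a) - ι(v a) ι(v i)` and
`ι(v a)² = Q (v a)`. When `2` is invertible, `Cl(Q)` is linearly isomorphic to the exterior
algebra, which has rank `2ⁿ` and into which `ι` maps injectively; a spanning family of `2ⁿ`
elements in a module of rank `2ⁿ` is then a basis.
-/

open CliffordAlgebra

namespace CliffordAlgebra

open Module Submodule

section OrderedProducts

variable {R M I : Type*} [CommRing R] [AddCommGroup M] [Module R M] (Q : QuadraticForm R M)
  [LinearOrder I] (v : I → M)

def ιProd (s : Finset I) : CliffordAlgebra Q :=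
  ((s.sort (· ≤ ·)).map fun i => ι Q (v i)).prod

variable {Q v}

@[simp]
theorem ιProd_empty : ιProd Q v ∅ = 1 := by
  simp [ιProd]

@[simp]
theorem ιProd_singleton (i : I) : ιProd Q v {i} = ι Q (v i) := by
  simp [ιProd]

theorem ι_mul_ιProd_of_forall_lt {i : I} {s : Finset I} (h : ∀ x ∈ s, i < x) :
    ι Q (v i) * ιProd Q v s = ιProd Q v (insert i s) := by
  rw [ιProd, ιProd, Finset.sort_insert _ (fun x hx => (h x hx).le) fun hi => (h i hi).false,
    List.map_cons, List.prod_cons]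

theorem ι_mul_mem_span_ιProd_of_forall_lt {a : I} {t : Finset I} (ht : ∀ x ∈ t, a < x)
    {y : CliffordAlgebra Q} (hy : y ∈ span R (ιProd Q v '' Set.Iic t)) :
    ι Q (v a) * y ∈ span R (ιProd Q v '' Set.Iic (insert a t)) := by
  have hmap := mem_map_of_mem (f := LinearMap.mulLeft R (ι Q (v a))) hy
  rw [map_span, ← Set.image_comp] at hmap
  refine span_mono ?_ hmap
  rintro _ ⟨u, hu, rfl⟩
  exact ⟨insert a u, Finset.insert_subset_insert a hu,
    (ι_mul_ιProd_of_forall_lt fun x hx => ht x (hu hx)).symm⟩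

theorem ι_mul_ιProd_mem_span (i : I) (t : Finset I) :
    ι Q (v i) * ιProd Q v t ∈ span R (ιProd Q v '' Set.Iic (insert i t)) := by
  induction t using Finset.induction_on_min generalizing i with
  | empty =>
    rw [ιProd_empty, mul_one, ← ιProd_singleton]
    exact subset_span ⟨_, Set.self_mem_Iic, rfl⟩
  | insert a s has ih =>
    rcases lt_trichotomy i a with hia | rfl | hai
    · have hi : ∀ x ∈ insert a s, i < x := by
        intro x hx
        rcases Finset.mem_insert.1 hx with rfl | hx
        exacts [hia, hia.trans (has x hx)]
      rw [ι_mul_ιProd_of_forall_lt hi]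
      exact subset_span ⟨_, Set.self_mem_Iic, rfl⟩
    · rw [← ι_mul_ιProd_of_forall_lt has, ← mul_assoc, ι_sq_scalar, ← Algebra.smul_def]
      refine smul_mem _ _ (subset_span ⟨s, ?_, rfl⟩)
      exact (Finset.subset_insert _ _).trans (Finset.subset_insert _ _)
    · -- `ι (v i) ι (v a) = polar Q (v i) (v a) - ι (v a) ι (v i)`
      rw [← ι_mul_ιProd_of_forall_lt has, ← mul_assoc,
        eq_sub_of_add_eq (ι_mul_ι_add_swap (v i) (v a)), sub_mul, ← Algebra.smul_def, mul_assoc]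
      refine sub_mem (smul_mem _ _ (subset_span ⟨s, ?_, rfl⟩)) ?_
      · exact (Finset.subset_insert _ _).trans (Finset.subset_insert _ _)
      · rw [Finset.insert_comm i a s]
        refine ι_mul_mem_span_ιProd_of_forall_lt (fun x hx => ?_) (ih i)
        rcases Finset.mem_insert.1 hx with rfl | hx
        exacts [hai, has x hx]

theorem span_range_ιProd (hv : span R (Set.range v) = ⊤) :
    span R (Set.range (ιProd Q v)) = ⊤ := by
  set S := span R (Set.range (ιProd Q v))
  have hι_generator (i : I) {y : CliffordAlgebra Q} (hy : y ∈ S) : ι Q (v i) * y ∈ S := by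
    induction hy using span_induction with
    | mem _ hy =>
      obtain ⟨t, rfl⟩ := hy
      exact span_mono (Set.image_subset_range _ _) (ι_mul_ιProd_mem_span i t)
    | zero => simp
    | add _ _ _ _ h₁ h₂ => simpa [mul_add] using add_mem h₁ h₂
    | smul r _ _ h => simpa [mul_smul_comm] using smul_mem S r h
  have hι (m : M) {y : CliffordAlgebra Q} (hy : y ∈ S) : ι Q m * y ∈ S := by
    have hm : m ∈ span R (Set.range v) := hv ▸ mem_top
    induction hm using span_induction with
    | mem _ hm =>
      obtain ⟨i, rfl⟩ := hm
      exact hι_generator i hy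
    | zero => simp
    | add _ _ _ _ h₁ h₂ => simpa [add_mul] using add_mem h₁ h₂
    | smul r _ _ h => simpa [smul_mul_assoc] using smul_mem S r h
  rw [eq_top_iff]
  rintro x -
  induction x using left_induction with
  | algebraMap r =>
    rw [Algebra.algebraMap_eq_smul_one, ← ιProd_empty (Q := Q) (v := v)]
    exact smul_mem _ _ (subset_span ⟨∅, rfl⟩)
  | add _ _ h₁ h₂ => exact add_mem h₁ h₂
  | ι_mul _ m h => exact hι m h

end OrderedProducts

section Invertible

variable {R M : Type*} [CommRing R] [Invertible (2 : R)] [AddCommGroup M] [Module R M]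
  (Q : QuadraticForm R M)

theorem ι_injective : Function.Injective (ι Q) := fun m₁ m₂ h => by
  have h' := congrArg (equivExterior Q) h
  simp only [equivExterior, changeFormEquiv_apply, changeForm_ι] at h'
  exact (ExteriorAlgebra.ι_inj R m₁ m₂).1 h'

theorem finrank_eq_two_pow_finrank [Nontrivial R] [OrzechProperty R] [Module.Free R M]
    [Module.Finite R M] : finrank R (CliffordAlgebra Q) = 2 ^ finrank R M := by
  rw [(equivExterior Q).finrank_eq, finrank_eq_card_basis (finBasis R M).ExteriorAlgebra,
    Fintype.card_finset, Fintype.card_fin]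

end Invertible

end CliffordAlgebra

namespace Module.Basis

variable {R M I : Type*} [CommRing R] [Nontrivial R] [OrzechProperty R] [Invertible (2 : R)]
  [AddCommGroup M] [Module R M] [Fintype I] [LinearOrder I] (Q : QuadraticForm R M)
  (b : Basis I R M)

noncomputable def cliffordAlgebra : Basis (Finset I) R (CliffordAlgebra Q) :=
  haveI := Module.Free.of_basis b
  haveI := Module.Finite.of_basis b
  basisOfTopLeSpanOfCardEqFinrank (ιProd Q b) (span_range_ιProd b.span_eq).ge <| by
    rw [finrank_eq_two_pow_finrank, finrank_eq_card_basis b, Fintype.card_finset]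

theorem coe_cliffordAlgebra : ⇑(b.cliffordAlgebra Q) = ιProd Q b :=
  coe_basisOfTopLeSpanOfCardEqFinrank _ _ _

end Module.Basis

/-- For a finite-dimensional real vector space `V` of dimension `n` with quadratic form `Φ`,
the canonical map `i : V → Cl(Φ)` is injective and `Cl(Φ)` has dimension `2ⁿ`; moreover,
given a basis `(e₁,…,eₙ)` of `V`, the products `i(e_{i₁})⋯i(e_{i_k})` for
`1 ≤ i₁ < ⋯ < i_k ≤ n` together with `1` (the empty product) form a basis of `Cl(Φ)`. -/
theorem clifford_dimension_and_basis {V : Type*} [AddCommGroup V] [Module ℝ V]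
    {n : ℕ} (e : Module.Basis (Fin n) ℝ V) (Q : QuadraticForm ℝ V) :
    Function.Injective (ι Q) ∧
    Module.finrank ℝ (CliffordAlgebra Q) = 2 ^ n ∧
    ∃ B : Module.Basis (Finset (Fin n)) ℝ (CliffordAlgebra Q),
      ∀ s : Finset (Fin n), B s = ((s.sort (· ≤ ·)).map fun i => ι Q (e i)).prod := by
  refine ⟨ι_injective Q, ?_, e.cliffordAlgebra Q, fun s => by rw [e.coe_cliffordAlgebra]; rfl⟩
  rw [Module.finrank_eq_card_basis (e.cliffordAlgebra Q), Fintype.card_finset, Fintype.card_fin]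
end

section
/- For the nondegenerate negative-definite quadratic form Φ on ℝⁿ, the kernel of the twisted adjoint representation ρ : Γₙ → GL(n, ℝ), ρ(x)(v) = α(x) v x⁻¹, equals ℝ*·1, the set of nonzero scalar multiples of the identity of the Clifford algebra Clₙ. -/
/-! For `v ∈ M`, the map `x ↦ v x − α(x) v` is an `α`-twisted derivation sending `w ∈ M` to the
polar form `B(v, w)`, so it is the contraction of `x` by `B(v, ·)`. As `B` is nondegenerate,
`α(x) v = v x` for all `v` says that every contraction of `x` vanishes. The module isomorphism
`Cl(Q) ≃ ⋀ M` commutes with contractions, and on `⋀ M` the operator `∑ᵢ eᵢ ∧ (eᵢ* ⌋ ·)`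
multiplies the degree-`k` part by `k`; in characteristic zero, an element killed by all
contractions therefore lies in degree `0`. -/

open CliffordAlgebra

/-- The negative-definite quadratic form `Φ(x₁,…,xₙ) = −(x₁² + ⋯ + xₙ²)` on `ℝⁿ`. -/
noncomputable def negDefQF (n : ℕ) : QuadraticForm ℝ (Fin n → ℝ) :=
  QuadraticMap.weightedSumSquares ℝ (fun _ : Fin n => (-1 : ℝ))

namespace CliffordAlgebra

variable {R M : Type*} [CommRing R] [AddCommGroup M] [Module R M] {Q : QuadraticForm R M}

theorem ι_mul_sub_involute_mul_ι (v : M) (x : CliffordAlgebra Q) :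
    ι Q v * x - involute x * ι Q v = contractLeft (QuadraticMap.polarBilin Q v) x := by
  induction x using CliffordAlgebra.left_induction with
  | algebraMap r => rw [contractLeft_algebraMap, AlgHom.commutes, Algebra.commutes, sub_self]
  | add x y hx hy => rw [map_add, map_add, ← hx, ← hy, mul_add, add_mul]; abel
  | ι_mul m x hx =>
    rw [contractLeft_ι_mul, ← hx, map_mul, involute_ι, QuadraticMap.polarBilin_apply_apply,
      Algebra.smul_def, ← ι_mul_ι_add_swap]
    noncomm_ring

end CliffordAlgebra

namespace ExteriorAlgebra

variable {R M I : Type*} [CommRing R] [AddCommGroup M] [Module R M] [Fintype I]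

theorem sum_ι_mul_contractLeft_of_mem (b : Module.Basis I R M) {k : ℕ} {y : ExteriorAlgebra R M}
    (hy : y ∈ ⋀[R]^k M) :
    ∑ i, ι R (b i) * contractLeft (b.coord i) y = k • y := by
  induction hy using Submodule.pow_induction_on_left' with
  | algebraMap r => simp [contractLeft_algebraMap]
  | add x y k _ _ hx hy => simp only [map_add, mul_add, Finset.sum_add_distrib, hx, hy, smul_add]
  | mem_mul m hm k x _ ih =>
    obtain ⟨a, rfl⟩ := hm
    have hswap (i : I) : ι R (b i) * ι R a = -(ι R a * ι R (b i)) :=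
      eq_neg_of_add_eq_zero_left (ι_add_mul_swap _ _)
    have hrepr : ∑ i, b.coord i a • ι R (b i) = ι R a := by
      simp_rw [← map_smul, ← map_sum, Module.Basis.coord_apply, b.sum_repr]
    calc ∑ i, ι R (b i) * contractLeft (b.coord i) (ι R a * x)
        = (∑ i, b.coord i a • ι R (b i)) * x
            + ι R a * ∑ i, ι R (b i) * contractLeft (b.coord i) x := by
          simp only [contractLeft_ι_mul, mul_sub, ← mul_assoc, hswap, Finset.sum_mul,
            Finset.mul_sum, Finset.sum_add_distrib, neg_mul, sub_neg_eq_add, mul_smul_comm,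
            smul_mul_assoc]
      _ = (k + 1) • (ι R a * x) := by rw [hrepr, ih, mul_smul_comm, add_smul, one_smul, add_comm]

theorem proj_sum_ι_mul_contractLeft (b : Module.Basis I R M) (k : ℕ) (y : ExteriorAlgebra R M) :
    GradedAlgebra.proj (fun i : ℕ => ⋀[R]^i M) k (∑ i, ι R (b i) * contractLeft (b.coord i) y) =
      k • GradedAlgebra.proj (fun i : ℕ => ⋀[R]^i M) k y := by
  induction y using DirectSum.Decomposition.inductionOn (fun i : ℕ => ⋀[R]^i M) with
  | zero => simp
  | add y z hy hz => simp only [map_add, mul_add, Finset.sum_add_distrib, hy, hz, smul_add]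
  | @homogeneous j y =>
    rw [sum_ι_mul_contractLeft_of_mem b y.2, map_nsmul]
    obtain rfl | hjk := eq_or_ne j k
    · rfl
    · rw [GradedAlgebra.proj_apply,
        DirectSum.decompose_of_mem_ne (fun i : ℕ => ⋀[R]^i M) y.2 hjk, smul_zero, smul_zero]

variable {K M : Type*} [Field K] [CharZero K] [AddCommGroup M] [Module K M] [FiniteDimensional K M]

theorem mem_range_algebraMap_of_forall_contractLeft_eq_zero {y : ExteriorAlgebra K M}
    (hy : ∀ d : Module.Dual K M, contractLeft d y = 0) :
    y ∈ Set.range (algebraMap K (ExteriorAlgebra K M)) := by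
  classical
  have proj_eq_zero (k : ℕ) (hk : k ≠ 0) :
      (DirectSum.decompose (fun i : ℕ => ⋀[K]^i M) y k : ExteriorAlgebra K M) = 0 := by
    have h := proj_sum_ι_mul_contractLeft (Module.finBasis K M) k y
    rw [Finset.sum_eq_zero fun i _ => by rw [hy, mul_zero], map_zero,
      ← Nat.cast_smul_eq_nsmul K] at h
    exact (smul_eq_zero.mp h.symm).resolve_left (Nat.cast_ne_zero.mpr hk)
  have hy0 : y ∈ ⋀[K]^0 M := by
    rw [← DirectSum.sum_support_decompose (fun i : ℕ => ⋀[K]^i M) y,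
      Finset.sum_eq_single 0 (fun k _ hk => proj_eq_zero k hk) (fun h => by
        rw [DFinsupp.notMem_support_iff.mp h, ZeroMemClass.coe_zero])]
    exact SetLike.coe_mem _
  rw [exteriorPower, pow_zero] at hy0
  exact Submodule.mem_one.mp hy0

end ExteriorAlgebra

theorem QuadraticMap.polarBilin_surjective_of_separatingLeft {K M : Type*} [Field K]
    [AddCommGroup M] [Module K M] [FiniteDimensional K M] {Q : QuadraticForm K M}
    (hQ : Q.polarBilin.SeparatingLeft) : Function.Surjective Q.polarBilin :=
  (LinearMap.injective_iff_surjective_of_finrank_eq_finrank Subspace.dual_finrank_eq.symm).mp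
    (LinearMap.ker_eq_bot.mp (LinearMap.separatingLeft_iff_ker_eq_bot.mp hQ))

namespace CliffordAlgebra

variable {K M : Type*} [Field K] [CharZero K] [AddCommGroup M] [Module K M] [FiniteDimensional K M]
  {Q : QuadraticForm K M}

theorem mem_range_algebraMap_of_forall_contractLeft_eq_zero {x : CliffordAlgebra Q}
    (hx : ∀ d : Module.Dual K M, contractLeft d x = 0) :
    x ∈ Set.range (algebraMap K (CliffordAlgebra Q)) := by
  obtain ⟨r, hr⟩ := ExteriorAlgebra.mem_range_algebraMap_of_forall_contractLeft_eq_zero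
    (y := equivExterior Q x) fun d => by
      rw [equivExterior, changeFormEquiv_apply, ← changeForm_contractLeft, hx, map_zero]
  refine ⟨r, (equivExterior Q).injective ?_⟩
  rw [← hr, equivExterior, changeFormEquiv_apply, changeForm_algebraMap]

theorem mem_range_algebraMap_of_forall_involute_mul_ι (hQ : Q.polarBilin.SeparatingLeft)
    {x : CliffordAlgebra Q} (hx : ∀ v, involute x * ι Q v = ι Q v * x) :
    x ∈ Set.range (algebraMap K (CliffordAlgebra Q)) :=
  mem_range_algebraMap_of_forall_contractLeft_eq_zero fun d => by
    obtain ⟨v, rfl⟩ := QuadraticMap.polarBilin_surjective_of_separatingLeft hQ d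
    rw [← ι_mul_sub_involute_mul_ι, hx, sub_self]

end CliffordAlgebra

theorem negDefQF_anisotropic (n : ℕ) : (negDefQF n).Anisotropic := by
  intro v hv
  simp only [negDefQF, QuadraticMap.weightedSumSquares_apply, smul_eq_mul, neg_one_mul,
    Finset.sum_neg_distrib, neg_eq_zero] at hv
  ext i
  exact mul_self_eq_zero.mp ((Finset.sum_eq_zero_iff_of_nonneg fun j _ => mul_self_nonneg (v j)).mp
    hv i (Finset.mem_univ i))

theorem negDefQF_polarBilin_separatingLeft (n : ℕ) : (negDefQF n).polarBilin.SeparatingLeft :=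
  LinearMap.BilinForm.separatingLeft_of_anisotropic fun v hv =>
    negDefQF_anisotropic n v <| by
      simpa [QuadraticMap.toQuadraticMap_polarBilin] using hv

theorem twisted_adjoint_kernel_general (n : ℕ) (x : (CliffordAlgebra (negDefQF n))ˣ) :
    (∀ v : Fin n → ℝ,
        involute (x : CliffordAlgebra (negDefQF n)) * ι (negDefQF n) v * ↑x⁻¹ =
          ι (negDefQF n) v) ↔
      ∃ c : ℝ, c ≠ 0 ∧
        (x : CliffordAlgebra (negDefQF n)) = algebraMap ℝ (CliffordAlgebra (negDefQF n)) c := by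
  constructor
  · intro h
    obtain ⟨c, hc⟩ := mem_range_algebraMap_of_forall_involute_mul_ι
      (negDefQF_polarBilin_separatingLeft n) fun v => (Units.mul_inv_eq_iff_eq_mul x).mp (h v)
    refine ⟨c, ?_, hc.symm⟩
    rintro rfl
    exact x.ne_zero (hc.symm.trans (map_zero _))
  · rintro ⟨c, -, hxc⟩ v
    rw [hxc, AlgHom.commutes, Algebra.commutes, mul_assoc, ← hxc, Units.mul_inv, mul_one]

/-- For the negative-definite form on `ℝⁿ`, the kernel of the twisted adjoint
representation `ρ : Γₙ → GL(n, ℝ)`, `ρ(x)(v) = α(x) v x⁻¹`, is exactly `ℝ*·1`: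
an element `x` of the Clifford group `Γₙ` acts trivially on `ℝⁿ` iff it is a nonzero
scalar multiple of `1`. -/
theorem twisted_adjoint_kernel (n : ℕ) (x : (CliffordAlgebra (negDefQF n))ˣ)
    (hx : ∀ v : Fin n → ℝ,
      involute (x : CliffordAlgebra (negDefQF n)) * ι (negDefQF n) v * ↑x⁻¹ ∈
        Set.range (ι (negDefQF n))) :
    (∀ v : Fin n → ℝ,
        involute (x : CliffordAlgebra (negDefQF n)) * ι (negDefQF n) v * ↑x⁻¹ =
          ι (negDefQF n) v) ↔
      ∃ c : ℝ, c ≠ 0 ∧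
        (x : CliffordAlgebra (negDefQF n)) = algebraMap ℝ (CliffordAlgebra (negDefQF n)) c :=
  twisted_adjoint_kernel_general n x
end

section
/- If x ∈ Cl⁰₃ (the even part of the Clifford algebra of the negative-definite form on ℝ³) satisfies N(x) = 1, then x v x⁻¹ ∈ ℝ³ for all v ∈ ℝ³; consequently Spin(3) = {a·1 + b·e₂e₃ + c·e₃e₁ + d·e₁e₂ : a² + b² + c² + d² = 1}, which is isomorphic to the group of unit quaternions SU(2). -/
open CliffordAlgebra
open scoped Quaternion

/-- Membership in `Pin(n)`: `x` lies in the Clifford group `Γₙ` and has norm `N(x) = 1`. -/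
def InPin (n : ℕ) (x : (CliffordAlgebra (negDefQF n))ˣ) : Prop :=
  (∀ v : Fin n → ℝ,
    involute (x : CliffordAlgebra (negDefQF n)) * ι (negDefQF n) v * ↑x⁻¹ ∈
      Set.range (ι (negDefQF n))) ∧
  (x : CliffordAlgebra (negDefQF n)) * reverse (involute (x : CliffordAlgebra (negDefQF n))) = 1

/-- Membership in `Spin(n)`: membership in `Pin(n)` together with evenness. -/
def InSpin (n : ℕ) (x : (CliffordAlgebra (negDefQF n))ˣ) : Prop :=
  InPin n x ∧ (x : CliffordAlgebra (negDefQF n)) ∈ evenOdd (negDefQF n) 0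

/-!
The even subalgebra `Cl⁰₃` is a copy of `ℍ`: the bivectors `e₁e₂, e₂e₃, e₃e₁` satisfy Hamilton's
relations, and reversion restricts to quaternion conjugation, so `N(x) = x x̄` becomes the
quaternion norm. The pseudoscalar `ω = e₁e₂e₃` is central, and multiplication by `ω` carries the
pure quaternions onto `ℝ³`. Hence an even `x = q` of norm one has `x⁻¹ = q̄`, and
`x (ω p) x⁻¹ = ω (q p q̄)` is again a vector because `q p q̄` is pure. So `Spin(3)` is the image of
the unit quaternions under this embedding.
-/

theorem Quaternion.re_mul_mul_star_of_re_eq_zero {R : Type*} [CommRing R] (q : ℍ[R]) {p : ℍ[R]}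
    (hp : p.re = 0) : (q * p * star q).re = 0 := by
  simp only [re_mul, imI_mul, imJ_mul, imK_mul, re_star, imI_star, imJ_star, imK_star, hp]
  ring

theorem Quaternion.mem_unitary_iff {R : Type*} [CommRing R] (q : ℍ[R]) :
    q ∈ unitary ℍ[R] ↔ normSq q = 1 := by
  rw [Unitary.mem_iff, star_mul_self, self_mul_star, and_self, ← coe_one, coe_inj]

namespace NegDefClifford

variable {n : ℕ}

theorem negDefQF_apply_single (i : Fin n) : negDefQF n (Pi.single i 1) = -1 := by
  simp [negDefQF, QuadraticMap.weightedSumSquares_apply, Pi.single_apply]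

theorem polar_negDefQF_single {i j : Fin n} (h : i ≠ j) :
    QuadraticMap.polar (negDefQF n) (Pi.single i 1) (Pi.single j 1) = 0 := by
  simp [QuadraticMap.polar, negDefQF, QuadraticMap.weightedSumSquares_apply, Pi.single_apply,
    mul_add, Finset.sum_add_distrib, h, h.symm]

noncomputable def e (i : Fin n) : CliffordAlgebra (negDefQF n) := ι (negDefQF n) (Pi.single i 1)

theorem e_mul_self (i : Fin n) : e i * e i = -1 := by
  rw [e, ι_sq_scalar, negDefQF_apply_single, map_neg, map_one]

theorem e_mul_e_of_lt {i j : Fin n} (h : j < i) : e i * e j = -(e j * e i) := by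
  rw [e, e, ι_mul_ι_comm, polar_negDefQF_single h.ne', map_zero, zero_sub]

theorem e_mul_e_mul_self (i : Fin n) (x : CliffordAlgebra (negDefQF n)) :
    e i * (e i * x) = -x := by
  rw [← mul_assoc, e_mul_self, neg_one_mul]

theorem e_mul_e_mul_of_lt {i j : Fin n} (h : j < i) (x : CliffordAlgebra (negDefQF n)) :
    e i * (e j * x) = -(e j * (e i * x)) := by
  rw [← mul_assoc, e_mul_e_of_lt h, neg_mul, mul_assoc]

theorem ι_eq_sum (v : Fin n → ℝ) : ι (negDefQF n) v = ∑ i, v i • e i := by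
  conv_lhs => rw [← Finset.univ_sum_single v]
  simp only [e, map_sum, ← map_smul, ← Pi.single_smul, smul_eq_mul, mul_one]

local notation "Cl₃" => CliffordAlgebra (negDefQF 3)

noncomputable def quaternionBasis : QuaternionAlgebra.Basis Cl₃ (-1 : ℝ) 0 (-1 : ℝ) where
  i := e 0 * e 1
  j := e 1 * e 2
  k := e 2 * e 0
  i_mul_i := by simp (disch := decide) [mul_assoc, e_mul_e_mul_of_lt, e_mul_self]
  j_mul_j := by simp (disch := decide) [mul_assoc, e_mul_e_mul_of_lt, e_mul_self]
  i_mul_j := by simp (disch := decide) [mul_assoc, e_mul_e_of_lt, e_mul_e_mul_self]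
  j_mul_i := by
    simp (disch := decide) [mul_assoc, e_mul_e_mul_of_lt, e_mul_e_of_lt, e_mul_e_mul_self]

noncomputable def toClifford : ℍ[ℝ] →ₐ[ℝ] Cl₃ := quaternionBasis.liftHom

theorem toClifford_apply (q : ℍ[ℝ]) :
    toClifford q = algebraMap ℝ Cl₃ q.re + q.imI • (e 0 * e 1) + q.imJ • (e 1 * e 2) +
      q.imK • (e 2 * e 0) :=
  rfl

theorem toClifford_mk (a b c d : ℝ) :
    toClifford ⟨a, b, c, d⟩ = algebraMap ℝ Cl₃ a + b • (e 0 * e 1) + c • (e 1 * e 2) +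
      d • (e 2 * e 0) :=
  rfl

theorem toClifford_injective : Function.Injective toClifford :=
  toClifford.toRingHom.injective

theorem toClifford_mem_evenOdd_zero (q : ℍ[ℝ]) : toClifford q ∈ evenOdd (negDefQF 3) 0 := by
  rw [toClifford_apply]
  refine add_mem (add_mem (add_mem (SetLike.algebraMap_mem_graded _ _) ?_) ?_) ?_ <;>
    exact Submodule.smul_mem _ _ (ι_mul_ι_mem_evenOdd_zero _ _ _)

theorem exists_toClifford_eq_ι_mul_ι (u v : Fin 3 → ℝ) :
    ∃ q : ℍ[ℝ], toClifford q = ι (negDefQF 3) u * ι (negDefQF 3) v := by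
  refine ⟨⟨-(u 0 * v 0 + u 1 * v 1 + u 2 * v 2), u 0 * v 1 - u 1 * v 0,
    u 1 * v 2 - u 2 * v 1, u 2 * v 0 - u 0 * v 2⟩, ?_⟩
  simp (disch := decide) only [toClifford_mk, ι_eq_sum, Fin.sum_univ_three, add_mul, mul_add,
    smul_mul_assoc, mul_smul_comm, e_mul_self, e_mul_e_of_lt, Algebra.algebraMap_eq_smul_one]
  module

theorem exists_toClifford_eq_of_mem_evenOdd_zero {x : Cl₃} (hx : x ∈ evenOdd (negDefQF 3) 0) :
    ∃ q : ℍ[ℝ], toClifford q = x := by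
  induction x, hx using even_induction with
  | algebraMap r => exact ⟨algebraMap ℝ ℍ[ℝ] r, toClifford.commutes r⟩
  | add a b _ _ iha ihb =>
    obtain ⟨p, rfl⟩ := iha
    obtain ⟨q, rfl⟩ := ihb
    exact ⟨p + q, map_add _ _ _⟩
  | ι_mul_ι_mul u v a _ ih =>
    obtain ⟨q, rfl⟩ := ih
    obtain ⟨p, hp⟩ := exists_toClifford_eq_ι_mul_ι u v
    exact ⟨p * q, by rw [map_mul, hp]⟩

theorem involute_toClifford (q : ℍ[ℝ]) : involute (toClifford q) = toClifford q :=
  involute_eq_of_mem_even (toClifford_mem_evenOdd_zero q)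

theorem reverse_toClifford (q : ℍ[ℝ]) : reverse (toClifford q) = toClifford (star q) := by
  have reverse_e_mul_e (i j : Fin 3) : reverse (e i * e j) = e j * e i := by
    rw [reverse.map_mul, e, e, reverse_ι, reverse_ι]
  simp (disch := decide) only [toClifford_apply, map_add, map_smul, reverse.commutes,
    reverse_e_mul_e, e_mul_e_of_lt, Quaternion.re_star, Quaternion.imI_star, Quaternion.imJ_star,
    Quaternion.imK_star, smul_neg, neg_smul, map_neg, neg_neg]

noncomputable def pseudoscalar : Cl₃ := e 0 * e 1 * e 2

theorem pseudoscalar_commute (x : Cl₃) : Commute pseudoscalar x := by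
  have commute_e (i : Fin 3) : Commute pseudoscalar (e i) := by
    fin_cases i <;>
      simp (disch := decide) [Commute, SemiconjBy, pseudoscalar, mul_assoc, e_mul_e_mul_of_lt,
        e_mul_e_of_lt, e_mul_e_mul_self, e_mul_self]
  induction x using CliffordAlgebra.induction with
  | algebraMap r => exact Algebra.commute_algebraMap_right r _
  | ι v =>
    rw [ι_eq_sum]
    exact Commute.sum_right _ _ _ fun i _ => (commute_e i).smul_right _
  | mul a b ha hb => exact ha.mul_right hb
  | add a b ha hb => exact ha.add_right hb

theorem pseudoscalar_mul_toClifford_of_re_eq_zero {p : ℍ[ℝ]} (hp : p.re = 0) :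
    pseudoscalar * toClifford p = ι (negDefQF 3) ![-p.imJ, -p.imK, -p.imI] := by
  simp (disch := decide) only [toClifford_apply, hp, map_zero, zero_add, ι_eq_sum,
    Fin.sum_univ_three, pseudoscalar, mul_add, mul_smul_comm, mul_assoc, e_mul_e_mul_of_lt,
    e_mul_e_of_lt, e_mul_e_mul_self, e_mul_self, mul_neg, mul_one, Matrix.cons_val_zero,
    Matrix.cons_val_one, Matrix.cons_val_two, Matrix.tail_cons, Matrix.head_cons]
  module

theorem mem_range_ι_iff (x : Cl₃) :
    x ∈ Set.range (ι (negDefQF 3)) ↔ ∃ p : ℍ[ℝ], p.re = 0 ∧ pseudoscalar * toClifford p = x := by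
  constructor
  · rintro ⟨v, rfl⟩
    refine ⟨⟨0, -v 2, -v 0, -v 1⟩, rfl, (pseudoscalar_mul_toClifford_of_re_eq_zero rfl).trans ?_⟩
    congr 1
    funext i
    fin_cases i <;> simp
  · rintro ⟨p, hp, rfl⟩
    exact ⟨_, (pseudoscalar_mul_toClifford_of_re_eq_zero hp).symm⟩

theorem toClifford_mul_mul_toClifford_star_mem_range_ι (q : ℍ[ℝ]) {x : Cl₃}
    (hx : x ∈ Set.range (ι (negDefQF 3))) :
    toClifford q * x * toClifford (star q) ∈ Set.range (ι (negDefQF 3)) := by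
  obtain ⟨p, hp, rfl⟩ := (mem_range_ι_iff x).1 hx
  refine (mem_range_ι_iff _).2 ⟨q * p * star q, Quaternion.re_mul_mul_star_of_re_eq_zero q hp, ?_⟩
  simp only [map_mul, mul_assoc, (pseudoscalar_commute (toClifford q)).left_comm]

theorem mul_ι_mul_inv_mem_range_ι {x : Cl₃ˣ} (hx : (x : Cl₃) ∈ evenOdd (negDefQF 3) 0)
    (hN : (x : Cl₃) * reverse (involute (x : Cl₃)) = 1) (v : Fin 3 → ℝ) :
    (x : Cl₃) * ι (negDefQF 3) v * ↑x⁻¹ ∈ Set.range (ι (negDefQF 3)) := by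
  obtain ⟨q, hq⟩ := exists_toClifford_eq_of_mem_evenOdd_zero hx
  have hinv : (↑x⁻¹ : Cl₃) = toClifford (star q) := by
    rw [← reverse_toClifford, ← involute_toClifford, hq]
    exact Units.inv_eq_of_mul_eq_one_right hN
  rw [hinv, ← hq]
  exact toClifford_mul_mul_toClifford_star_mem_range_ι q ⟨v, rfl⟩

theorem toClifford_mul_reverse_involute (q : ℍ[ℝ]) :
    toClifford q * reverse (involute (toClifford q)) = algebraMap ℝ Cl₃ (Quaternion.normSq q) := by
  rw [involute_toClifford, reverse_toClifford, ← map_mul, Quaternion.self_mul_star]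
  exact toClifford.commutes _

theorem inSpin_three_iff (x : Cl₃ˣ) :
    InSpin 3 x ↔ ∃ q : ℍ[ℝ], Quaternion.normSq q = 1 ∧ toClifford q = x := by
  constructor
  · rintro ⟨⟨-, hN⟩, heven⟩
    obtain ⟨q, hq⟩ := exists_toClifford_eq_of_mem_evenOdd_zero heven
    refine ⟨q, ?_, hq⟩
    rw [← hq, toClifford_mul_reverse_involute] at hN
    exact (algebraMap ℝ Cl₃).injective (hN.trans (map_one _).symm)
  · rintro ⟨q, hq, hx⟩
    have heven : (x : Cl₃) ∈ evenOdd (negDefQF 3) 0 := hx ▸ toClifford_mem_evenOdd_zero q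
    have hN : (x : Cl₃) * reverse (involute (x : Cl₃)) = 1 := by
      rw [← hx, toClifford_mul_reverse_involute, hq, map_one]
    refine ⟨⟨fun v => ?_, hN⟩, heven⟩
    rw [involute_eq_of_mem_even heven]
    exact mul_ι_mul_inv_mem_range_ι heven hN v

noncomputable def unitaryToUnits : unitary ℍ[ℝ] →* Cl₃ˣ :=
  (Units.map (toClifford : ℍ[ℝ] →* Cl₃)).comp Unitary.toUnits

theorem unitaryToUnits_injective : Function.Injective unitaryToUnits := fun _ _ h =>
  Subtype.ext (toClifford_injective (congrArg Units.val h))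

theorem inSpin_three_iff_mem_range (x : Cl₃ˣ) : InSpin 3 x ↔ x ∈ unitaryToUnits.range := by
  rw [inSpin_three_iff]
  constructor
  · rintro ⟨q, hq, hx⟩
    exact ⟨⟨q, (Quaternion.mem_unitary_iff q).2 hq⟩, Units.ext hx⟩
  · rintro ⟨u, rfl⟩
    exact ⟨u, (Quaternion.mem_unitary_iff _).1 u.2, rfl⟩

noncomputable def unitaryEquivSpin : unitary ℍ[ℝ] ≃ {x : Cl₃ˣ // InSpin 3 x} :=
  Equiv.ofBijective (fun u => ⟨unitaryToUnits u, (inSpin_three_iff_mem_range _).2 ⟨u, rfl⟩⟩)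
    ⟨fun _ _ h => unitaryToUnits_injective (congrArg Subtype.val h),
      fun x => ((inSpin_three_iff_mem_range x).1 x.2).imp fun _ => Subtype.ext⟩

theorem coe_unitaryEquivSpin (u : unitary ℍ[ℝ]) :
    (unitaryEquivSpin u : Cl₃ˣ) = unitaryToUnits u :=
  rfl

end NegDefClifford

open NegDefClifford in
/-- If `x ∈ Cl⁰₃` satisfies `N(x) = 1` then `x v x⁻¹ ∈ ℝ³` for all `v ∈ ℝ³`; consequently
`Spin(3) = {a·1 + b·e₂e₃ + c·e₃e₁ + d·e₁e₂ : a² + b² + c² + d² = 1}`, which is isomorphic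
to the group of unit quaternions `SU(2)`. -/
theorem spin_three_eq_unit_quaternions :
    (∀ x : (CliffordAlgebra (negDefQF 3))ˣ,
      (x : CliffordAlgebra (negDefQF 3)) ∈ evenOdd (negDefQF 3) 0 →
      (x : CliffordAlgebra (negDefQF 3)) *
          reverse (involute (x : CliffordAlgebra (negDefQF 3))) = 1 →
      ∀ v : Fin 3 → ℝ,
        (x : CliffordAlgebra (negDefQF 3)) * ι (negDefQF 3) v * ↑x⁻¹ ∈
          Set.range (ι (negDefQF 3))) ∧
    (∀ x : (CliffordAlgebra (negDefQF 3))ˣ, InSpin 3 x ↔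
      ∃ a b c d : ℝ, a ^ 2 + b ^ 2 + c ^ 2 + d ^ 2 = 1 ∧
        (x : CliffordAlgebra (negDefQF 3)) =
          algebraMap ℝ (CliffordAlgebra (negDefQF 3)) a +
            b • (ι (negDefQF 3) (Pi.single 1 1) * ι (negDefQF 3) (Pi.single 2 1)) +
            c • (ι (negDefQF 3) (Pi.single 2 1) * ι (negDefQF 3) (Pi.single 0 1)) +
            d • (ι (negDefQF 3) (Pi.single 0 1) * ι (negDefQF 3) (Pi.single 1 1))) ∧
    ∃ f : {x : (CliffordAlgebra (negDefQF 3))ˣ // InSpin 3 x} → unitary ℍ[ℝ],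
      Function.Bijective f ∧
      ∀ (x y : (CliffordAlgebra (negDefQF 3))ˣ) (hx : InSpin 3 x) (hy : InSpin 3 y)
        (hxy : InSpin 3 (x * y)), f ⟨x * y, hxy⟩ = f ⟨x, hx⟩ * f ⟨y, hy⟩ := by
  refine ⟨fun _ => mul_ι_mul_inv_mem_range_ι, fun x => ?_,
    unitaryEquivSpin.symm, unitaryEquivSpin.symm.bijective, fun x y hx hy hxy => ?_⟩
  · rw [inSpin_three_iff]
    constructor
    · rintro ⟨q, hq, hx⟩
      refine ⟨q.re, q.imJ, q.imK, q.imI, by linear_combination q.normSq_def'.symm.trans hq, ?_⟩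
      rw [← hx, toClifford_apply]
      simp only [e]
      abel
    · rintro ⟨a, b, c, d, h, hx⟩
      refine ⟨⟨a, d, b, c⟩, (Quaternion.normSq_def' _).trans (by linear_combination h), ?_⟩
      rw [hx, toClifford_mk]
      simp only [e]
      abel
  · apply unitaryEquivSpin.injective
    ext1
    rw [Equiv.apply_symm_apply, coe_unitaryEquivSpin, map_mul, ← coe_unitaryEquivSpin,
      ← coe_unitaryEquivSpin, Equiv.apply_symm_apply, Equiv.apply_symm_apply]
end
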